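/- A pair {x, y} of distinct vertices of the graph G = G(Q,S) has distance at least 4 in G if and only if {x, y} = {v, w}, or {x, y} = {q*, w}, or {x, y} = {v, q_i} for some element q_i ∈ Q. -/

import Mathlib

/-- Raw vertex names for the graph `G(Q,S)`: elements `q_i`, hyperedges `S_j`,
copies `S_j'`, subdivision vertices `q^i_j`, and special vertices `q*`, `u₁`, `u₂`, `v`, `w`. -/
inductive HVertex (m n : ℕ) : Type
  | elt : Fin m → HVertex m n
  | hyp : Fin n → HVertex m n
  | copy : Fin n → HVertex m n
  | sub : Fin m → Fin n → HVertex m n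
  | qstar : HVertex m n
  | u1 : HVertex m n
  | u2 : HVertex m n
  | v : HVertex m n
  | w : HVertex m n

/-- A raw vertex name is an actual vertex of `G(Q,S)`: the subdivision vertex `q^i_j`
exists only when `q_i ∈ S_j`. -/
def HVertex.OK {m n : ℕ} (S : Fin n → Set (Fin m)) : HVertex m n → Prop
  | .sub i j => i ∈ S j
  | _ => True

/-- The vertex set of `G(Q,S)`. -/
def GVertex {m n : ℕ} (S : Fin n → Set (Fin m)) : Type := {x : HVertex m n // x.OK S}

/-- The (asymmetrically listed) edges of `G(Q,S)`:
`q^i_j q_i`, `q^i_j S_j`, `q_i S_j'` (for `q_i ∈ S_j`), `S_j S_k'` (all `j,k`),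
`q* u₁`, `q* u₂`, `q* q^i_j`, `u₁ S_j`, `u₂ S_j`, `u₁ v`, `u₂ v`, `w S_j'`. -/
def baseAdj {m n : ℕ} (S : Fin n → Set (Fin m)) : HVertex m n → HVertex m n → Prop
  | .sub i _, .elt i' => i = i'
  | .sub _ j, .hyp j' => j = j'
  | .elt i, .copy j => i ∈ S j
  | .hyp _, .copy _ => True
  | .qstar, .u1 => True
  | .qstar, .u2 => True
  | .qstar, .sub _ _ => True
  | .u1, .hyp _ => True
  | .u2, .hyp _ => True
  | .u1, .v => True
  | .u2, .v => True
  | .w, .copy _ => True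
  | _, _ => False

/-- The graph `G = G(Q,S)`. -/
def GQS {m n : ℕ} (S : Fin n → Set (Fin m)) : SimpleGraph (GVertex S) :=
  SimpleGraph.fromRel (fun a b => baseAdj S a.1 b.1)

/-!
Upper bound: let `S_k = Q`. Every vertex is adjacent to `S_k'`, to every `S_j`, to `q*` and some
`S_j`, or to `u₁`. As `S_k' ~ S_j ~ u₁ ~ q*`, two vertices of these classes are joined by a walk of
length at most 3 through these hubs, except possibly when one is adjacent to `S_k'` and the other
to `u₁`; checking that case by hand produces exactly the three far pairs.

Lower bound: the distances from `v` and from `w` change by at most one along every edge, and they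
separate `v` from `w` and from each `q_i`, and `w` from `q*`, by 4.
-/

namespace SimpleGraph

variable {V : Type*} {G : SimpleGraph V} {x a b y : V}

theorem Walk.le_add_length {f : V → ℤ} (hf : ∀ a b, G.Adj a b → f a ≤ f b + 1)
    (p : G.Walk x y) : f x ≤ f y + p.length := by
  induction p with
  | nil => simp
  | cons h _ ih => have := hf _ _ h; push_cast [Walk.length_cons]; omega

theorem Reachable.abs_sub_le_dist {f : V → ℤ} (hf : ∀ a b, G.Adj a b → f a ≤ f b + 1)
    (h : G.Reachable x y) : |f x - f y| ≤ G.dist x y := by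
  obtain ⟨p, hp⟩ := h.exists_walk_length_eq_dist
  have h₁ := p.le_add_length hf
  have h₂ := p.reverse.le_add_length hf
  rw [Walk.length_reverse, hp] at *
  exact abs_sub_le_iff.2 ⟨by omega, by omega⟩

theorem dist_le_two_of_adj_of_adj (h₁ : G.Adj x a) (h₂ : G.Adj a y) : G.dist x y ≤ 2 :=
  G.dist_le (.cons h₁ (.cons h₂ .nil))

theorem dist_le_three_of_adj_of_adj_of_adj (h₁ : G.Adj x a) (h₂ : G.Adj a b) (h₃ : G.Adj b y) :
    G.dist x y ≤ 3 :=
  G.dist_le (.cons h₁ (.cons h₂ (.cons h₃ .nil)))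

end SimpleGraph

namespace GQS

open SimpleGraph

variable {m n : ℕ} {S : Fin n → Set (Fin m)}

def IsFarPair (a b : HVertex m n) : Prop :=
  ({a, b} : Set (HVertex m n)) = {.v, .w} ∨ ({a, b} : Set (HVertex m n)) = {.qstar, .w} ∨
    ∃ i : Fin m, ({a, b} : Set (HVertex m n)) = {.v, .elt i}

theorem isFarPair_comm {a b : HVertex m n} : IsFarPair a b ↔ IsFarPair b a := by
  simp only [IsFarPair, Set.pair_comm a b]

theorem adj_of_baseAdj {x y : GVertex S} (hne : x.1 ≠ y.1)
    (h : baseAdj S x.1 y.1 ∨ baseAdj S y.1 x.1) : (GQS S).Adj x y :=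
  ⟨fun hxy => hne (congrArg Subtype.val hxy), h⟩

variable {k : Fin n}

theorem adj_cases (hk : S k = Set.univ) (x : GVertex S) :
    (GQS S).Adj x ⟨.copy k, trivial⟩ ∨ (∀ j, (GQS S).Adj x ⟨.hyp j, trivial⟩) ∨
      ((GQS S).Adj x ⟨.qstar, trivial⟩ ∧ ∃ j, (GQS S).Adj x ⟨.hyp j, trivial⟩) ∨
      (GQS S).Adj x ⟨.u1, trivial⟩ := by
  obtain ⟨a, ha⟩ := x
  cases a with
  | elt i => exact .inl (adj_of_baseAdj nofun (.inl (Set.eq_univ_iff_forall.1 hk i)))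
  | hyp j => exact .inl (adj_of_baseAdj nofun (.inl trivial))
  | copy j => exact .inr (.inl fun j' => adj_of_baseAdj nofun (.inr trivial))
  | sub i j =>
    exact .inr (.inr (.inl
      ⟨adj_of_baseAdj nofun (.inr trivial), j, adj_of_baseAdj nofun (.inl rfl)⟩))
  | qstar => exact .inr (.inr (.inr (adj_of_baseAdj nofun (.inl trivial))))
  | u1 =>
    exact .inr (.inr (.inl
      ⟨adj_of_baseAdj nofun (.inr trivial), k, adj_of_baseAdj nofun (.inl trivial)⟩))
  | u2 =>
    exact .inr (.inr (.inl
      ⟨adj_of_baseAdj nofun (.inr trivial), k, adj_of_baseAdj nofun (.inl trivial)⟩))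
  | v => exact .inr (.inr (.inr (adj_of_baseAdj nofun (.inr trivial))))
  | w => exact .inl (adj_of_baseAdj nofun (.inl trivial))

theorem connected (hk : S k = Set.univ) : (GQS S).Connected := by
  have hc : ∀ j, (GQS S).Adj ⟨.copy k, trivial⟩ ⟨.hyp j, trivial⟩ :=
    fun j => adj_of_baseAdj nofun (.inr trivial)
  have hu : (GQS S).Adj ⟨.hyp k, trivial⟩ ⟨.u1, trivial⟩ := adj_of_baseAdj nofun (.inr trivial)
  refine (SimpleGraph.connected_iff_exists_forall_reachable _).2 ⟨⟨.copy k, trivial⟩, fun x => ?_⟩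
  rcases adj_cases hk x with hx | hx | ⟨-, j, hx⟩ | hx
  · exact hx.symm.reachable
  · exact (hc k).reachable.trans (hx k).symm.reachable
  · exact (hc j).reachable.trans hx.symm.reachable
  · exact (hc k).reachable.trans (hu.reachable.trans hx.symm.reachable)

theorem dist_le_three_or_isFarPair_of_adj_copy_of_adj_u1 (hk : S k = Set.univ) {x y : GVertex S}
    (hx : (GQS S).Adj x ⟨.copy k, trivial⟩) (hy : (GQS S).Adj y ⟨.u1, trivial⟩) :
    (GQS S).dist x y ≤ 3 ∨ IsFarPair x.1 y.1 := by
  obtain ⟨a, ha⟩ := x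
  obtain ⟨b, hb⟩ := y
  have hx' := hx.2
  have hy' := hy.2
  cases a <;> cases b <;> simp only [baseAdj, or_self, or_false, false_or] at hx' hy'
  case elt.qstar i =>
    exact .inl (Nat.le_succ_of_le (dist_le_two_of_adj_of_adj
      (a := ⟨.sub i k, Set.eq_univ_iff_forall.1 hk i⟩) (adj_of_baseAdj nofun (.inr rfl))
      (adj_of_baseAdj nofun (.inr trivial))))
  case elt.v i => exact .inr (.inr (.inr ⟨i, Set.pair_comm _ _⟩))
  case w.qstar => exact .inr (.inr (.inl (Set.pair_comm _ _)))
  case w.v => exact .inr (.inl (Set.pair_comm _ _))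
  case hyp.qstar | hyp.v =>
    exact .inl (Nat.le_succ_of_le (dist_le_two_of_adj_of_adj (a := ⟨.u1, trivial⟩)
      (adj_of_baseAdj nofun (.inr trivial)) hy.symm))
  all_goals exact .inl (Nat.le_succ_of_le
    (dist_le_two_of_adj_of_adj hx (adj_of_baseAdj nofun (.inr trivial))))

theorem dist_le_three_or_isFarPair (hk : S k = Set.univ) (x y : GVertex S) :
    (GQS S).dist x y ≤ 3 ∨ IsFarPair x.1 y.1 := by
  have hc : ∀ j, (GQS S).Adj ⟨.copy k, trivial⟩ ⟨.hyp j, trivial⟩ :=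
    fun j => adj_of_baseAdj nofun (.inr trivial)
  have hu : (GQS S).Adj ⟨.hyp k, trivial⟩ ⟨.u1, trivial⟩ := adj_of_baseAdj nofun (.inr trivial)
  have hq : (GQS S).Adj ⟨.qstar, trivial⟩ ⟨.u1, trivial⟩ := adj_of_baseAdj nofun (.inl trivial)
  rcases adj_cases hk x with hx | hx | ⟨hx, j, hxj⟩ | hx <;>
    rcases adj_cases hk y with hy | hy | ⟨hy, j', hyj⟩ | hy
  · exact .inl (Nat.le_succ_of_le (dist_le_two_of_adj_of_adj hx hy.symm))
  · exact .inl (dist_le_three_of_adj_of_adj_of_adj hx (hc k) (hy k).symm)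
  · exact .inl (dist_le_three_of_adj_of_adj_of_adj hx (hc j') hyj.symm)
  · exact dist_le_three_or_isFarPair_of_adj_copy_of_adj_u1 hk hx hy
  · exact .inl (dist_le_three_of_adj_of_adj_of_adj (hx k) (hc k).symm hy.symm)
  · exact .inl (Nat.le_succ_of_le (dist_le_two_of_adj_of_adj (hx k) (hy k).symm))
  · exact .inl (Nat.le_succ_of_le (dist_le_two_of_adj_of_adj (hx j') hyj.symm))
  · exact .inl (dist_le_three_of_adj_of_adj_of_adj (hx k) hu hy.symm)
  · exact .inl (dist_le_three_of_adj_of_adj_of_adj hxj (hc j).symm hy.symm)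
  · exact .inl (Nat.le_succ_of_le (dist_le_two_of_adj_of_adj hxj (hy j).symm))
  · exact .inl (Nat.le_succ_of_le (dist_le_two_of_adj_of_adj hx hy.symm))
  · exact .inl (dist_le_three_of_adj_of_adj_of_adj hx hq hy.symm)
  · rw [dist_comm, isFarPair_comm]
    exact dist_le_three_or_isFarPair_of_adj_copy_of_adj_u1 hk hy hx
  · exact .inl (dist_le_three_of_adj_of_adj_of_adj hx hu.symm (hy k).symm)
  · exact .inl (dist_le_three_of_adj_of_adj_of_adj hx hq.symm hy.symm)
  · exact .inl (Nat.le_succ_of_le (dist_le_two_of_adj_of_adj hx hy.symm))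

-- The distances from `v` and from `w`.
def vLayer : HVertex m n → ℤ
  | .v => 0 | .u1 | .u2 => 1 | .qstar | .hyp _ => 2 | .sub _ _ | .copy _ => 3 | .elt _ | .w => 4

def wLayer : HVertex m n → ℤ
  | .w => 0 | .copy _ => 1 | .elt _ | .hyp _ => 2 | .sub _ _ | .u1 | .u2 => 3 | .qstar | .v => 4

theorem abs_vLayer_sub_le {a b : HVertex m n} (h : baseAdj S a b) : |vLayer a - vLayer b| ≤ 1 := by
  cases a <;> cases b <;> simp_all [baseAdj, vLayer]

theorem abs_wLayer_sub_le {a b : HVertex m n} (h : baseAdj S a b) : |wLayer a - wLayer b| ≤ 1 := by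
  cases a <;> cases b <;> simp_all [baseAdj, wLayer]

theorem abs_sub_le_dist (hk : S k = Set.univ) {f : HVertex m n → ℤ}
    (hf : ∀ a b, baseAdj S a b → |f a - f b| ≤ 1) (x y : GVertex S) :
    |f x.1 - f y.1| ≤ (GQS S).dist x y := by
  refine (connected hk x y).abs_sub_le_dist (f := fun z => f z.1) fun a b hab => ?_
  rcases hab.2 with h | h
  · linarith [(abs_le.1 (hf _ _ h)).2]
  · linarith [(abs_le.1 (hf _ _ h)).1]

theorem four_le_dist_of_isFarPair (hk : S k = Set.univ) {x y : GVertex S}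
    (h : IsFarPair x.1 y.1) : 4 ≤ (GQS S).dist x y := by
  suffices 4 ≤ |vLayer x.1 - vLayer y.1| ∨ 4 ≤ |wLayer x.1 - wLayer y.1| by
    rcases this with h4 | h4
    · exact_mod_cast h4.trans (abs_sub_le_dist hk (fun _ _ => abs_vLayer_sub_le) x y)
    · exact_mod_cast h4.trans (abs_sub_le_dist hk (fun _ _ => abs_wLayer_sub_le) x y)
  rcases h with h | h | ⟨i, h⟩ <;>
    rcases Set.pair_eq_pair_iff.1 h with ⟨hx, hy⟩ | ⟨hx, hy⟩ <;> simp [hx, hy, vLayer, wLayer]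

end GQS

theorem stmt_8 {m n : ℕ} (S : Fin n → Set (Fin m)) (hn : 2 ≤ n)
    (hSlast : S ⟨n - 1, by omega⟩ = Set.univ) (x y : GVertex S) :
    4 ≤ (GQS S).dist x y ↔
      ({x.1, y.1} : Set (HVertex m n)) = {.v, .w} ∨
      ({x.1, y.1} : Set (HVertex m n)) = {.qstar, .w} ∨
      ∃ i : Fin m, ({x.1, y.1} : Set (HVertex m n)) = {.v, .elt i} :=
  ⟨fun h => (GQS.dist_le_three_or_isFarPair hSlast x y).resolve_left (by omega),
    GQS.four_le_dist_of_isFarPair hSlast⟩
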